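/- Let a ∈ k be nonzero and let δ be the k-derivation xy²·∂/∂x + (ax² + y³)·∂/∂y of k[x,y]. Then the kernel of δ equals the k-subalgebra of k[x,y] generated by x², y² and ax³ + xy³. -/

import Mathlib

/-!
In characteristic 2 every `f ∈ k[x, y]` can be written as `r₀ + r₁x + r₂y + r₃xy` with all
`rᵢ ∈ k[x², y²]`, and uniquely so: `∂/∂x` and `∂/∂y` kill `k[x², y²]`, so applying them peels
off the coefficients one at a time. Every derivation kills `k[x², y²]`, and `x·δy + y·δx = ax³`,
so `δf = a x² r₂ + (y² r₁ + a x² r₃) x + y² r₂ · y`. Hence `δf = 0` forces `r₂ = 0` and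
`y² r₁ = a x² r₃`; since `x` is prime, `r₁ = x² h` and `r₃ = a⁻¹ y² h` with `h ∈ k[x², y²]`, so that
`f = r₀ + a⁻¹ h (ax³ + xy³)`.
-/

open MvPolynomial

namespace MvPolynomial

section Decomposition

variable (R : Type*) [CommSemiring R]

noncomputable abbrev evenSubalgebra : Subalgebra R (MvPolynomial (Fin 2) R) :=
  Algebra.adjoin R {X 0 ^ 2, X 1 ^ 2}

variable {R}

lemma X_sq_mem_evenSubalgebra (i : Fin 2) :
    (X i : MvPolynomial (Fin 2) R) ^ 2 ∈ evenSubalgebra R := by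
  apply Algebra.subset_adjoin
  fin_cases i <;> simp

theorem exists_evenSubalgebra_decomposition (f : MvPolynomial (Fin 2) R) :
    ∃ r₀ ∈ evenSubalgebra R, ∃ r₁ ∈ evenSubalgebra R, ∃ r₂ ∈ evenSubalgebra R,
      ∃ r₃ ∈ evenSubalgebra R, f = r₀ + r₁ * X 0 + r₂ * X 1 + r₃ * (X 0 * X 1) := by
  induction f using MvPolynomial.induction_on with
  | C c =>
    exact ⟨C c, Subalgebra.algebraMap_mem _ c, 0, zero_mem _, 0, zero_mem _, 0, zero_mem _,
      by ring⟩
  | add p q hp hq =>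
    obtain ⟨p₀, hp₀, p₁, hp₁, p₂, hp₂, p₃, hp₃, rfl⟩ := hp
    obtain ⟨q₀, hq₀, q₁, hq₁, q₂, hq₂, q₃, hq₃, rfl⟩ := hq
    exact ⟨p₀ + q₀, add_mem hp₀ hq₀, p₁ + q₁, add_mem hp₁ hq₁, p₂ + q₂, add_mem hp₂ hq₂,
      p₃ + q₃, add_mem hp₃ hq₃, by ring⟩
  | mul_X p i hp =>
    obtain ⟨p₀, hp₀, p₁, hp₁, p₂, hp₂, p₃, hp₃, rfl⟩ := hp
    fin_cases i
    · exact ⟨p₁ * X 0 ^ 2, mul_mem hp₁ (X_sq_mem_evenSubalgebra 0), p₀, hp₀,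
        p₃ * X 0 ^ 2, mul_mem hp₃ (X_sq_mem_evenSubalgebra 0), p₂, hp₂, by simp; ring⟩
    · exact ⟨p₂ * X 1 ^ 2, mul_mem hp₂ (X_sq_mem_evenSubalgebra 1),
        p₃ * X 1 ^ 2, mul_mem hp₃ (X_sq_mem_evenSubalgebra 1), p₀, hp₀, p₁, hp₁, by simp; ring⟩

end Decomposition

section CharTwo

variable {R : Type*} [CommRing R] [CharP R 2]

theorem derivation_eq_zero_of_mem_evenSubalgebra
    (D : Derivation R (MvPolynomial (Fin 2) R) (MvPolynomial (Fin 2) R))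
    {r : MvPolynomial (Fin 2) R} (hr : r ∈ evenSubalgebra R) : D r = 0 := by
  refine D.eqOn_adjoin (D2 := 0) ?_ hr
  rintro _ (rfl | rfl) <;>
    simp only [pow_two, Derivation.leibniz, CharTwo.add_self_eq_zero, Derivation.zero_apply]

theorem evenSubalgebra_decomposition_eq_zero {r₀ r₁ r₂ r₃ : MvPolynomial (Fin 2) R}
    (h₀ : r₀ ∈ evenSubalgebra R) (h₁ : r₁ ∈ evenSubalgebra R) (h₂ : r₂ ∈ evenSubalgebra R)
    (h₃ : r₃ ∈ evenSubalgebra R) (h : r₀ + r₁ * X 0 + r₂ * X 1 + r₃ * (X 0 * X 1) = 0) :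
    r₀ = 0 ∧ r₁ = 0 ∧ r₂ = 0 ∧ r₃ = 0 := by
  have hd : ∀ i : Fin 2, ∀ r ∈ evenSubalgebra R, pderiv i r = 0 := fun i _ ↦
    derivation_eq_zero_of_mem_evenSubalgebra (pderiv i)
  have hx : r₁ + r₃ * X 1 = 0 := by
    simpa [hd _ _ h₀, hd _ _ h₁, hd _ _ h₂, hd _ _ h₃, pderiv_X] using congrArg (pderiv 0) h
  have hy : r₂ + r₃ * X 0 = 0 := by
    simpa [hd _ _ h₀, hd _ _ h₁, hd _ _ h₂, hd _ _ h₃, pderiv_X] using congrArg (pderiv 1) h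
  obtain rfl : r₃ = 0 := by simpa [hd _ _ h₁, hd _ _ h₃, pderiv_X] using congrArg (pderiv 1) hx
  simp_all

variable [IsDomain R]

theorem mem_evenSubalgebra_of_mul_mem {e h : MvPolynomial (Fin 2) R}
    (he : e ∈ evenSubalgebra R) (he₀ : e ≠ 0) (heh : e * h ∈ evenSubalgebra R) :
    h ∈ evenSubalgebra R := by
  obtain ⟨h₀, hh₀, h₁, hh₁, h₂, hh₂, h₃, hh₃, rfl⟩ := exists_evenSubalgebra_decomposition h
  obtain ⟨-, h₁0, h₂0, h₃0⟩ := evenSubalgebra_decomposition_eq_zero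
    (sub_mem (mul_mem he hh₀) heh) (mul_mem he hh₁) (mul_mem he hh₂) (mul_mem he hh₃)
    (by ring : e * h₀ - e * (h₀ + h₁ * X 0 + h₂ * X 1 + h₃ * (X 0 * X 1)) + e * h₁ * X 0
      + e * h₂ * X 1 + e * h₃ * (X 0 * X 1) = 0)
  simp_all

theorem exists_eq_X_sq_mul_of_X_one_sq_mul_eq {r s : MvPolynomial (Fin 2) R}
    (hr : r ∈ evenSubalgebra R) (h : X 1 ^ 2 * r = X 0 ^ 2 * s) :
    ∃ t ∈ evenSubalgebra R, r = X 0 ^ 2 * t ∧ s = X 1 ^ 2 * t := by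
  have hX : ¬ (X 0 : MvPolynomial (Fin 2) R) ∣ X 1 ^ 2 := fun hd ↦
    absurd (X_dvd_X.1 (X_prime.dvd_of_dvd_pow hd)) (by decide)
  have hX₀ : (X 0 : MvPolynomial (Fin 2) R) ^ 2 ≠ 0 := pow_ne_zero 2 (X_ne_zero 0)
  obtain ⟨t, rfl⟩ := X_prime.pow_dvd_of_dvd_mul_left 2 hX ⟨s, h⟩
  refine ⟨t, mem_evenSubalgebra_of_mul_mem (X_sq_mem_evenSubalgebra 0) hX₀ hr, rfl, ?_⟩
  exact mul_left_cancel₀ hX₀ (by linear_combination -h)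

end CharTwo

end MvPolynomial

section Kernel

variable {k : Type*} [Field k] [CharP k 2] {a : k}
  {δ : Derivation k (MvPolynomial (Fin 2) k) (MvPolynomial (Fin 2) k)}

theorem map_eq_zero_of_mem_adjoin (hX₀ : δ (X 0) = X 0 * X 1 ^ 2)
    (hX₁ : δ (X 1) = C a * X 0 ^ 2 + X 1 ^ 3) {f : MvPolynomial (Fin 2) k}
    (hf : f ∈ Algebra.adjoin k {X 0 ^ 2, X 1 ^ 2, C a * X 0 ^ 3 + X 0 * X 1 ^ 3}) :
    δ f = 0 := by
  refine δ.eqOn_adjoin (D2 := 0) ?_ hf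
  rintro _ (rfl | rfl | rfl)
  · exact derivation_eq_zero_of_mem_evenSubalgebra δ (X_sq_mem_evenSubalgebra 0)
  · exact derivation_eq_zero_of_mem_evenSubalgebra δ (X_sq_mem_evenSubalgebra 1)
  · simp only [map_add, Derivation.leibniz, Derivation.leibniz_pow, derivation_C, smul_eq_mul,
      nsmul_eq_mul, hX₀, hX₁, Derivation.zero_apply]
    push_cast
    linear_combination (3 * C a * X 0 ^ 3 * X 1 ^ 2 + 2 * X 0 * X 1 ^ 5) *
      (CharTwo.two_eq_zero : (2 : MvPolynomial (Fin 2) k) = 0)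

theorem map_evenSubalgebra_decomposition (hX₀ : δ (X 0) = X 0 * X 1 ^ 2)
    (hX₁ : δ (X 1) = C a * X 0 ^ 2 + X 1 ^ 3) {r₀ r₁ r₂ r₃ : MvPolynomial (Fin 2) k}
    (h₀ : r₀ ∈ evenSubalgebra k) (h₁ : r₁ ∈ evenSubalgebra k) (h₂ : r₂ ∈ evenSubalgebra k)
    (h₃ : r₃ ∈ evenSubalgebra k) :
    δ (r₀ + r₁ * X 0 + r₂ * X 1 + r₃ * (X 0 * X 1)) =
      C a * X 0 ^ 2 * r₂ + (X 1 ^ 2 * r₁ + C a * X 0 ^ 2 * r₃) * X 0 + X 1 ^ 2 * r₂ * X 1 := by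
  simp only [map_add, Derivation.leibniz, smul_eq_mul, hX₀, hX₁,
    derivation_eq_zero_of_mem_evenSubalgebra δ h₀, derivation_eq_zero_of_mem_evenSubalgebra δ h₁,
    derivation_eq_zero_of_mem_evenSubalgebra δ h₂, derivation_eq_zero_of_mem_evenSubalgebra δ h₃]
  linear_combination (X 0 * X 1 ^ 3 * r₃) *
    (CharTwo.two_eq_zero : (2 : MvPolynomial (Fin 2) k) = 0)

theorem mem_adjoin_of_map_eq_zero (ha : a ≠ 0) (hX₀ : δ (X 0) = X 0 * X 1 ^ 2)
    (hX₁ : δ (X 1) = C a * X 0 ^ 2 + X 1 ^ 3) {f : MvPolynomial (Fin 2) k} (hf : δ f = 0) :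
    f ∈ Algebra.adjoin k {X 0 ^ 2, X 1 ^ 2, C a * X 0 ^ 3 + X 0 * X 1 ^ 3} := by
  obtain ⟨r₀, h₀, r₁, h₁, r₂, h₂, r₃, h₃, rfl⟩ := exists_evenSubalgebra_decomposition f
  rw [map_evenSubalgebra_decomposition hX₀ hX₁ h₀ h₁ h₂ h₃] at hf
  have two : (2 : MvPolynomial (Fin 2) k) = 0 := CharTwo.two_eq_zero
  have hCa : C a ∈ evenSubalgebra k := Subalgebra.algebraMap_mem _ a
  have hx := X_sq_mem_evenSubalgebra (R := k) 0
  have hy := X_sq_mem_evenSubalgebra (R := k) 1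
  obtain ⟨hr₂, hr₁₃, -, -⟩ := evenSubalgebra_decomposition_eq_zero (mul_mem (mul_mem hCa hx) h₂)
    (add_mem (mul_mem hy h₁) (mul_mem (mul_mem hCa hx) h₃)) (mul_mem hy h₂) (zero_mem _)
    (by linear_combination hf)
  obtain rfl : r₂ = 0 := by simpa [ha, X_ne_zero] using hr₂
  obtain ⟨t, ht, rfl, hr₃⟩ := exists_eq_X_sq_mul_of_X_one_sq_mul_eq h₁ (s := C a * r₃)
    (by linear_combination hr₁₃ - C a * X 0 ^ 2 * r₃ * two)
  have hCa_inv : C a⁻¹ * C a = (1 : MvPolynomial (Fin 2) k) := by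
    rw [← C_mul, inv_mul_cancel₀ ha, C_1]
  have hle : evenSubalgebra k ≤
      Algebra.adjoin k {X 0 ^ 2, X 1 ^ 2, C a * X 0 ^ 3 + X 0 * X 1 ^ 3} :=
    Algebra.adjoin_mono (Set.insert_subset_insert (Set.singleton_subset_iff.2 (Set.mem_insert _ _)))
  rw [show r₀ + X 0 ^ 2 * t * X 0 + 0 * X 1 + r₃ * (X 0 * X 1) =
      r₀ + C a⁻¹ * t * (C a * X 0 ^ 3 + X 0 * X 1 ^ 3) by
        linear_combination (-(t * X 0 ^ 3) - r₃ * X 0 * X 1) * hCa_inv + C a⁻¹ * X 0 * X 1 * hr₃]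
  exact add_mem (hle h₀) (mul_mem (mul_mem (Subalgebra.algebraMap_mem _ a⁻¹) (hle ht))
    (Algebra.subset_adjoin (by simp)))

end Kernel

theorem stmt_8_general (k : Type*) [Field k] [CharP k 2] (a : k) (ha : a ≠ 0)
    (δ : Derivation k (MvPolynomial (Fin 2) k) (MvPolynomial (Fin 2) k))
    (hδ : δ = mkDerivation k
      ![(X 0 : MvPolynomial (Fin 2) k) * X 1 ^ 2, C a * X 0 ^ 2 + X 1 ^ 3]) :
    {f : MvPolynomial (Fin 2) k | δ f = 0} =
      ↑(Algebra.adjoin k ({X 0 ^ 2, X 1 ^ 2, C a * X 0 ^ 3 + X 0 * X 1 ^ 3} :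
          Set (MvPolynomial (Fin 2) k))) := by
  have hX₀ : δ (X 0) = X 0 * X 1 ^ 2 := by simp [hδ, mkDerivation_X]
  have hX₁ : δ (X 1) = C a * X 0 ^ 2 + X 1 ^ 3 := by simp [hδ, mkDerivation_X]
  ext f
  exact ⟨mem_adjoin_of_map_eq_zero ha hX₀ hX₁, map_eq_zero_of_mem_adjoin hX₀ hX₁⟩

/-- For a ≠ 0 and δ = xy²·∂/∂x + (ax² + y³)·∂/∂y, the kernel of δ equals
the k-subalgebra generated by x², y², ax³ + xy³. -/
theorem stmt_8 (k : Type*) [Field k] [IsAlgClosed k] [CharP k 2] (a : k) (ha : a ≠ 0)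
    (δ : Derivation k (MvPolynomial (Fin 2) k) (MvPolynomial (Fin 2) k))
    (hδ : δ = mkDerivation k
      ![(X 0 : MvPolynomial (Fin 2) k) * X 1 ^ 2, C a * X 0 ^ 2 + X 1 ^ 3]) :
    {f : MvPolynomial (Fin 2) k | δ f = 0} =
      ↑(Algebra.adjoin k ({X 0 ^ 2, X 1 ^ 2, C a * X 0 ^ 3 + X 0 * X 1 ^ 3} :
          Set (MvPolynomial (Fin 2) k))) :=
  stmt_8_general k a ha δ hδ
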